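/- arXiv:1708.01384 — 2 statements merged into one kernel-verified Lean document; each statement's English description precedes it below -/
import Mathlib

section
/- Let A be a symmetric doubly stochastic K×K matrix with λ₂(A) < 1, let V be the PSD square root of (I-A)/(2K), let Ā = (I+A)/2, and let J₁,...,J_K : ℝ^M → ℝ be differentiable convex functions whose (weighted) sum J(w) = Σ_k q_k J_k(w) is strictly convex with minimizer w*. Suppose (W*, Y*) with Y* in the range of 𝒱 = V⊗I_M satisfies μ(Ā⊗I_M)∇𝒥(W*) + K𝒱Y* = 0 and 𝒱W* = 0 (with appropriate scaling q_k = 1/K and ∇𝒥(W) the stacked gradients). Then all K blocks of W* equal a common vector w⁰, and w⁰ satisfies Σ_k ∇J_k(w⁰) = 0, i.e., w⁰ = w*. -/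
/-!
Since `V` is symmetric and `V² ∝ I - A`, the relation `𝒱W = 0` gives `A w = w` for every
coordinate slice `w` of `W`, so the eigenspace hypothesis forces all blocks of `W` to agree. The
same factorisation gives `1ᵀV = 0` (as `1ᵀV² = 0`), so summing the first fixed-point equation over
the agents removes the dual term, while `1ᵀĀ = 1ᵀ` turns the primal term into `μ Σ_k ∇J_k(w⁰)`.
A stationary point of a convex function is a minimiser, and strict convexity makes it `w*`.
-/

open Matrix

theorem ConvexOn.add_le_of_hasFDerivAt {E : Type*} [NormedAddCommGroup E] [NormedSpace ℝ E]
    {f : E → ℝ} {f' : E →L[ℝ] ℝ} {x : E} (hf : ConvexOn ℝ Set.univ f) (hd : HasFDerivAt f f' x)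
    (y : E) : f x + f' (y - x) ≤ f y := by
  set φ : ℝ →ᵃ[ℝ] E := AffineMap.lineMap x y
  have hline : HasDerivAt (f ∘ φ) (f' (y - x)) 0 :=
    hd.comp_hasDerivAt_of_eq 0 AffineMap.hasDerivAt_lineMap (by simp [φ])
  have := (hf.comp_affineMap φ).le_slope_of_hasDerivAt (Set.mem_univ 0) (Set.mem_univ 1)
    zero_lt_one hline
  simp only [slope_def_field, φ, Function.comp_apply, AffineMap.lineMap_apply_zero,
    AffineMap.lineMap_apply_one, sub_zero, div_one] at this
  linarith

theorem isMinOn_sum_smul_of_sum_gradient_eq_zero {ι E : Type*} [Fintype ι]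
    [NormedAddCommGroup E] [InnerProductSpace ℝ E] [CompleteSpace E]
    {J : ι → E → ℝ} (hconv : ∀ k, ConvexOn ℝ Set.univ (J k))
    (hdiff : ∀ k, Differentiable ℝ (J k)) {c : ℝ} (hc : 0 ≤ c) {x : E}
    (hx : ∑ k, gradient (J k) x = 0) :
    IsMinOn (fun w => ∑ k, c * J k w) Set.univ x := by
  refine isMinOn_iff.mpr fun y _ => ?_
  have hlin : ∀ k, J k x + inner ℝ (gradient (J k) x) (y - x) ≤ J k y := fun k =>
    (hconv k).add_le_of_hasFDerivAt (hdiff k x).hasGradientAt.hasFDerivAt y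
  have hinner : ∑ k, inner ℝ (gradient (J k) x) (y - x) = 0 := by
    rw [← sum_inner, hx, inner_zero_left]
  calc ∑ k, c * J k x
      = ∑ k, c * (J k x + inner ℝ (gradient (J k) x) (y - x)) := by
        simp only [mul_add, Finset.sum_add_distrib, ← Finset.mul_sum, hinner, mul_zero, add_zero]
    _ ≤ ∑ k, c * J k y := Finset.sum_le_sum fun k _ => mul_le_mul_of_nonneg_left (hlin k) hc

theorem Matrix.sum_sum_smul_of_one_vecMul {ι R E : Type*} [Fintype ι] [CommSemiring R]
    [AddCommMonoid E] [Module R E] {B : Matrix ι ι R} {s : R} (hB : 1 ᵥ* B = fun _ => s)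
    (g : ι → E) : ∑ i, ∑ k, B i k • g k = s • ∑ k, g k := by
  rw [Finset.sum_comm, Finset.smul_sum]
  refine Finset.sum_congr rfl fun k _ => ?_
  have hcol := congrFun hB k
  simp only [vecMul, dotProduct, Pi.one_apply, one_mul] at hcol
  rw [← Finset.sum_smul, hcol]

theorem Matrix.one_vecMul_eq_zero_of_mul_self_eq {ι R : Type*} [Fintype ι] [DecidableEq ι]
    [CommRing R] [PartialOrder R] [StarRing R] [StarOrderedRing R] [NoZeroDivisors R]
    {A V : Matrix ι ι R} {c : R} (hV : V.IsHermitian) (hVsq : V * V = c • (1 - A))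
    (hA : 1 ᵥ* A = 1) : 1 ᵥ* V = 0 := by
  rw [← vecMul_self_mul_conjTranspose_eq_zero, hV.eq, hVsq, vecMul_smul, vecMul_sub, vecMul_one,
    hA, sub_self, smul_zero]

theorem Matrix.eq_of_mem_eigenspace_one {ι R : Type*} [Fintype ι] [DecidableEq ι] [CommRing R]
    {A : Matrix ι ι R} (hA : Module.End.eigenspace (toLin' A) 1 = Submodule.span R {1})
    {w : ι → R} (hw : A *ᵥ w = w) (i j : ι) : w i = w j := by
  have hmem : w ∈ Module.End.eigenspace (toLin' A) 1 := by
    rwa [Module.End.mem_eigenspace_iff, toLin'_apply, one_smul]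
  rw [hA] at hmem
  obtain ⟨a, rfl⟩ := Submodule.mem_span_singleton.mp hmem
  simp

theorem Matrix.eq_of_sum_smul_eq_zero {ι n : Type*} [Fintype ι] [DecidableEq ι]
    {A V : Matrix ι ι ℝ} {c : ℝ} (hc : c ≠ 0) (hVsq : V * V = c • (1 - A))
    (hA : Module.End.eigenspace (toLin' A) 1 = Submodule.span ℝ {1})
    {W : ι → EuclideanSpace ℝ n} (hW : ∀ i, ∑ k, V i k • W k = 0) (i j : ι) : W i = W j := by
  ext m
  have hVw : V *ᵥ (fun k => W k m) = 0 := funext fun l => by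
    simpa [mulVec, dotProduct] using congrArg (· m) (hW l)
  have hAw : A *ᵥ (fun k => W k m) = fun k => W k m := by
    have h := congrArg (V *ᵥ ·) hVw
    simp only [mulVec_mulVec, hVsq, mulVec_zero, smul_mulVec, sub_mulVec, one_mulVec,
      smul_eq_zero, hc, false_or, sub_eq_zero] at h
    exact h.symm
  exact eq_of_mem_eigenspace_one hA hAw i j

theorem fixed_point_optimality_general
    (K M : ℕ) (hK : 0 < K) (μ : ℝ) (hμ : 0 < μ)
    (A V : Matrix (Fin K) (Fin K) ℝ)
    (hcol : (1 : Fin K → ℝ) ᵥ* A = 1)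
    (hV : V.PosSemidef)
    (hVsq : V * V = ((1 : ℝ) / (2 * K)) • ((1 : Matrix (Fin K) (Fin K) ℝ) - A))
    (hlam : Module.End.eigenspace (Matrix.toLin' A) 1
        = Submodule.span ℝ {(1 : Fin K → ℝ)})
    (J : Fin K → EuclideanSpace ℝ (Fin M) → ℝ)
    (hdiff : ∀ k, Differentiable ℝ (J k))
    (hconv : ∀ k, ConvexOn ℝ Set.univ (J k))
    (hstrict : StrictConvexOn ℝ Set.univ (fun w => ∑ k, (1 / K : ℝ) * J k w))
    (wstar : EuclideanSpace ℝ (Fin M))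
    (hmin : IsMinOn (fun w => ∑ k, (1 / K : ℝ) * J k w) Set.univ wstar)
    (W Y : Fin K → EuclideanSpace ℝ (Fin M))
    (hopt1 : ∀ i, μ • (∑ k, (((1 : ℝ) / 2) • ((1 : Matrix (Fin K) (Fin K) ℝ) + A)) i k
          • gradient (J k) (W k))
        + (K : ℝ) • (∑ k, V i k • Y k) = 0)
    (hopt2 : ∀ i, (∑ k, V i k • W k) = 0) :
    ∃ w₀ : EuclideanSpace ℝ (Fin M),
      (∀ k, W k = w₀) ∧ (∑ k, gradient (J k) w₀) = 0 ∧ w₀ = wstar := by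
  obtain ⟨w₀, hW⟩ : ∃ w₀, ∀ k, W k = w₀ :=
    ⟨W ⟨0, hK⟩, fun k => eq_of_sum_smul_eq_zero (by positivity) hVsq hlam hopt2 k _⟩
  have hĀ : 1 ᵥ* (((1 : ℝ) / 2) • ((1 : Matrix (Fin K) (Fin K) ℝ) + A)) = 1 := by
    ext k
    norm_num [vecMul_smul, vecMul_add, hcol]
  have hV1 : 1 ᵥ* V = 0 := one_vecMul_eq_zero_of_mul_self_eq hV.1 hVsq hcol
  have hstat : ∑ k, gradient (J k) w₀ = 0 := by
    have h := Finset.sum_eq_zero fun i (_ : i ∈ Finset.univ) => hopt1 i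
    rw [Finset.sum_add_distrib, ← Finset.smul_sum, ← Finset.smul_sum,
      sum_sum_smul_of_one_vecMul (s := 1) hĀ, sum_sum_smul_of_one_vecMul (s := 0) hV1,
      one_smul, zero_smul, smul_zero, add_zero, smul_eq_zero] at h
    simpa only [hW] using h.resolve_left hμ.ne'
  refine ⟨w₀, hW, hstat, ?_⟩
  exact hstrict.eq_of_isMinOn
    (isMinOn_sum_smul_of_sum_gradient_eq_zero hconv hdiff (by positivity) hstat) hmin
    (Set.mem_univ _) (Set.mem_univ _)

/-- Fixed points of the primal-dual (exact diffusion) recursion are consensual and optimal: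
if `𝒱W* = 0` and `μ Ā ∇𝒥(W*) + K 𝒱 Y* = 0` with `Y*` in the range of `𝒱`, where `V` is
the PSD square root of `(I-A)/(2K)` for a symmetric doubly stochastic `A` with
`λ₂(A) < 1` and `Ā = (I+A)/2`, then all blocks of `W*` agree with a common vector `w⁰`
satisfying `Σ_k ∇J_k(w⁰) = 0`, i.e. `w⁰ = w*`, the minimizer of `J = Σ_k (1/K) J_k`. -/
theorem fixed_point_optimality
    (K M : ℕ) (hK : 0 < K) (μ : ℝ) (hμ : 0 < μ)
    (A V : Matrix (Fin K) (Fin K) ℝ)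
    (hsymm : A.IsSymm)
    (hnonneg : ∀ i j, 0 ≤ A i j)
    (hrow : A *ᵥ (1 : Fin K → ℝ) = 1)
    (hcol : (1 : Fin K → ℝ) ᵥ* A = 1)
    (hV : V.PosSemidef)
    (hVsq : V * V = ((1 : ℝ) / (2 * K)) • ((1 : Matrix (Fin K) (Fin K) ℝ) - A))
    (hlam : Module.End.eigenspace (Matrix.toLin' A) 1
        = Submodule.span ℝ {(1 : Fin K → ℝ)})
    (J : Fin K → EuclideanSpace ℝ (Fin M) → ℝ)
    (hdiff : ∀ k, Differentiable ℝ (J k))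
    (hconv : ∀ k, ConvexOn ℝ Set.univ (J k))
    (hstrict : StrictConvexOn ℝ Set.univ (fun w => ∑ k, (1 / K : ℝ) * J k w))
    (wstar : EuclideanSpace ℝ (Fin M))
    (hmin : IsMinOn (fun w => ∑ k, (1 / K : ℝ) * J k w) Set.univ wstar)
    (W Y : Fin K → EuclideanSpace ℝ (Fin M))
    (hY : ∃ Z : Fin K → EuclideanSpace ℝ (Fin M), ∀ i, Y i = ∑ k, V i k • Z k)
    (hopt1 : ∀ i, μ • (∑ k, (((1 : ℝ) / 2) • ((1 : Matrix (Fin K) (Fin K) ℝ) + A)) i k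
          • gradient (J k) (W k))
        + (K : ℝ) • (∑ k, V i k • Y k) = 0)
    (hopt2 : ∀ i, (∑ k, V i k • W k) = 0) :
    ∃ w₀ : EuclideanSpace ℝ (Fin M),
      (∀ k, W k = w₀) ∧ (∑ k, gradient (J k) w₀) = 0 ∧ w₀ = wstar :=
  fixed_point_optimality_general K M hK μ hμ A V hcol hV hVsq hlam J hdiff hconv hstrict wstar hmin
    W Y hopt1 hopt2
end

section
/- Let Q(·; x_n) : ℝ^M → ℝ for n = 1,...,N each have δ-Lipschitz gradient, let σ be a permutation of {1,...,N}, and define for vectors w_i, w₀, and previous-epoch iterates v₀,...,v_{N-1}, v_N with previous permutation τ: s = ∇Q(w_i; x_{σ(i+1)}) - ∇Q(w₀; x_{σ(i+1)}) + (1/N)Σ_{j=0}^{N-1} ∇Q(v_j; x_{τ(j+1)}) - ∇J(w_i), where J(w) = (1/N)Σ_n Q(w; x_n) and w₀ = v_N. Then ‖s‖² ≤ 6δ²‖w_i - w₀‖² + (3δ²/N) Σ_{j=0}^{N-1} ‖v_j - v_N‖². -/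
/-!
Since `τ` is a permutation, `∑ⱼ ∇Q(w₀; x_{τ(j)}) = ∑ₙ ∇Q(w₀; x_n)`, so the noise splits as
`a + c + d` with
* `a = ∇Q(wᵢ; x_{σ(i)}) - ∇Q(w₀; x_{σ(i)})`,
* `c = (1/N) ∑ⱼ (∇Q(vⱼ; x_{τ(j)}) - ∇Q(w₀; x_{τ(j)}))`,
* `d = (1/N) ∑ₙ (∇Q(w₀; x_n) - ∇Q(wᵢ; x_n))`.

Each of the three is controlled by the Lipschitz bound (for the averages through
Cauchy–Schwarz, `(∑ rⱼ)² ≤ N ∑ rⱼ²`), and `‖a + c + d‖² ≤ 3 (‖a‖² + ‖c‖² + ‖d‖²)` combines them.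
-/

open Finset

theorem gradient_const_mul_sum {F ι : Type*} [NormedAddCommGroup F] [InnerProductSpace ℝ F]
    [CompleteSpace F] (s : Finset ι) (f : ι → F → ℝ) (c : ℝ) {x : F}
    (hf : ∀ n ∈ s, DifferentiableAt ℝ (f n) x) :
    gradient (fun w => c * ∑ n ∈ s, f n w) x = c • ∑ n ∈ s, gradient (f n) x := by
  refine HasGradientAt.gradient ?_
  rw [hasGradientAt_iff_hasFDerivAt, map_smul, map_sum]
  exact (HasFDerivAt.fun_sum fun n hn => (hf n hn).hasGradientAt.hasFDerivAt).const_mul c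

theorem norm_add_add_sq_le {E : Type*} [SeminormedAddCommGroup E] (a b c : E) :
    ‖a + b + c‖ ^ 2 ≤ 3 * (‖a‖ ^ 2 + ‖b‖ ^ 2 + ‖c‖ ^ 2) := by
  have h : ‖a + b + c‖ ≤ ‖a‖ + ‖b‖ + ‖c‖ := norm_add₃_le
  nlinarith [norm_nonneg (a + b + c), sq_nonneg (‖a‖ - ‖b‖), sq_nonneg (‖a‖ - ‖c‖),
    sq_nonneg (‖b‖ - ‖c‖)]

theorem norm_inv_card_smul_sum_sq_le {E ι : Type*} [SeminormedAddCommGroup E]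
    [NormedSpace ℝ E] (s : Finset ι) (u : ι → E) (r : ι → ℝ) (h : ∀ j ∈ s, ‖u j‖ ≤ r j) :
    ‖(#s : ℝ)⁻¹ • ∑ j ∈ s, u j‖ ^ 2 ≤ (#s : ℝ)⁻¹ * ∑ j ∈ s, r j ^ 2 := by
  have hnorm : ‖(#s : ℝ)⁻¹ • ∑ j ∈ s, u j‖ ≤ (#s : ℝ)⁻¹ * ∑ j ∈ s, r j := by
    rw [norm_smul, Real.norm_of_nonneg (by positivity)]
    gcongr
    exact (norm_sum_le _ _).trans (sum_le_sum h)
  calc ‖(#s : ℝ)⁻¹ • ∑ j ∈ s, u j‖ ^ 2 ≤ ((#s : ℝ)⁻¹ * ∑ j ∈ s, r j) ^ 2 :=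
        pow_le_pow_left₀ (norm_nonneg _) hnorm 2
    _ = (#s : ℝ)⁻¹ ^ 2 * (∑ j ∈ s, r j) ^ 2 := mul_pow _ _ _
    _ ≤ (#s : ℝ)⁻¹ ^ 2 * (#s * ∑ j ∈ s, r j ^ 2) := by
        gcongr
        exact sq_sum_le_card_mul_sum_sq
    _ = (#s : ℝ)⁻¹ * ∑ j ∈ s, r j ^ 2 := by
        rcases eq_or_ne (#s : ℝ) 0 with hs | hs
        · simp [hs]
        · field_simp

theorem sub_add_smul_sum_sub_smul_sum_eq {ι E G : Type*} [Fintype ι] [AddCommGroup G]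
    [Module ℝ G] (g : ι → E → G) (τ : Equiv.Perm ι) (k : ι) (c : ℝ) (w w₀ : E) (v : ι → E) :
    g k w - g k w₀ + c • ∑ j, g (τ j) (v j) - c • ∑ n, g n w
      = (g k w - g k w₀) + c • ∑ j, (g (τ j) (v j) - g (τ j) w₀)
        + c • ∑ n, (g n w₀ - g n w) := by
  simp only [sum_sub_distrib, smul_sub, Equiv.sum_comp τ (fun n => g n w₀)]
  abel

theorem avrg_gradient_noise_bound_general
    (N M : ℕ) (δ : ℝ)
    (Q : Fin N → EuclideanSpace ℝ (Fin M) → ℝ)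
    (hdiff : ∀ n, Differentiable ℝ (Q n))
    (hlip : ∀ n (w₁ w₂ : EuclideanSpace ℝ (Fin M)),
      ‖gradient (Q n) w₁ - gradient (Q n) w₂‖ ≤ δ * ‖w₁ - w₂‖)
    (σ τ : Equiv.Perm (Fin N)) (i : Fin N)
    (wi w₀ : EuclideanSpace ℝ (Fin M))
    (v : Fin N → EuclideanSpace ℝ (Fin M)) (vN : EuclideanSpace ℝ (Fin M))
    (hvN : vN = w₀) :
    ‖gradient (Q (σ i)) wi - gradient (Q (σ i)) w₀
        + (1 / N : ℝ) • (∑ j : Fin N, gradient (Q (τ j)) (v j))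
        - gradient (fun w => (1 / N : ℝ) * ∑ n, Q n w) wi‖ ^ 2
      ≤ 6 * δ ^ 2 * ‖wi - w₀‖ ^ 2
        + (3 * δ ^ 2 / N) * ∑ j : Fin N, ‖v j - vN‖ ^ 2 := by
  subst vN
  rw [gradient_const_mul_sum _ _ _ fun n _ => (hdiff n).differentiableAt,
    sub_add_smul_sum_sub_smul_sum_eq (fun n => gradient (Q n))]
  have hcurrent :
      ‖gradient (Q (σ i)) wi - gradient (Q (σ i)) w₀‖ ^ 2 ≤ δ ^ 2 * ‖wi - w₀‖ ^ 2 := by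
    rw [← mul_pow]; exact pow_le_pow_left₀ (norm_nonneg _) (hlip _ _ _) 2
  have hprevious := norm_inv_card_smul_sum_sq_le univ
    (fun j => gradient (Q (τ j)) (v j) - gradient (Q (τ j)) w₀) (fun j => δ * ‖v j - w₀‖)
    fun j _ => hlip _ _ _
  have hfull := norm_inv_card_smul_sum_sq_le univ
    (fun n => gradient (Q n) w₀ - gradient (Q n) wi) (fun _ => δ * ‖wi - w₀‖)
    fun n _ => norm_sub_rev wi w₀ ▸ hlip n w₀ wi
  have hN : (N : ℝ) ≠ 0 := Nat.cast_ne_zero.mpr i.pos.ne'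
  simp only [card_univ, Fintype.card_fin, sum_const, nsmul_eq_mul, mul_pow, ← mul_sum,
    ← one_div] at hprevious hfull
  rw [← mul_assoc, one_div_mul_cancel hN, one_mul] at hfull
  calc _ ≤ 3 * (_ + _ + _) := norm_add_add_sq_le _ _ _
    _ ≤ 3 * (δ ^ 2 * ‖wi - w₀‖ ^ 2 + 1 / N * (δ ^ 2 * ∑ j, ‖v j - w₀‖ ^ 2)
        + δ ^ 2 * ‖wi - w₀‖ ^ 2) := by gcongr
    _ = _ := by ring

/-- AVRG gradient-noise bound: with `δ`-Lipschitz gradients, a current permutation `σ`,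
a previous permutation `τ` with previous-epoch iterates `v₀, ..., v_{N-1}` and
`v_N = w₀`, the gradient noise
`s = ∇Q(w_i; x_{σ(i)}) - ∇Q(w₀; x_{σ(i)}) + (1/N)Σ_j ∇Q(v_j; x_{τ(j)}) - ∇J(w_i)`
satisfies `‖s‖² ≤ 6δ²‖w_i - w₀‖² + (3δ²/N)Σ_j ‖v_j - v_N‖²`. -/
theorem avrg_gradient_noise_bound
    (N M : ℕ) (hN : 0 < N) (δ : ℝ) (hδ : 0 ≤ δ)
    (Q : Fin N → EuclideanSpace ℝ (Fin M) → ℝ)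
    (hdiff : ∀ n, Differentiable ℝ (Q n))
    (hlip : ∀ n (w₁ w₂ : EuclideanSpace ℝ (Fin M)),
      ‖gradient (Q n) w₁ - gradient (Q n) w₂‖ ≤ δ * ‖w₁ - w₂‖)
    (σ τ : Equiv.Perm (Fin N)) (i : Fin N)
    (wi w₀ : EuclideanSpace ℝ (Fin M))
    (v : Fin N → EuclideanSpace ℝ (Fin M)) (vN : EuclideanSpace ℝ (Fin M))
    (hvN : vN = w₀) :
    ‖gradient (Q (σ i)) wi - gradient (Q (σ i)) w₀
        + (1 / N : ℝ) • (∑ j : Fin N, gradient (Q (τ j)) (v j))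
        - gradient (fun w => (1 / N : ℝ) * ∑ n, Q n w) wi‖ ^ 2
      ≤ 6 * δ ^ 2 * ‖wi - w₀‖ ^ 2
        + (3 * δ ^ 2 / N) * ∑ j : Fin N, ‖v j - vN‖ ^ 2 :=
  avrg_gradient_noise_bound_general N M δ Q hdiff hlip σ τ i wi w₀ v vN hvN
end
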